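/- arXiv:1805.01557 — 2 statements merged into one kernel-verified Lean document; each statement's English description precedes it below -/
import Mathlib

section
/- There exists an embedding set {T_1,…,T_6} for K_6^3 such that for every subset U ⊆ [6], the family obtained by replacing T_u with its reversal T_u^{-1} for each u ∈ U is not a strong embedding set; in particular, K_6^3 admits an embedding set that is not equivalent to any strong embedding set. -/
/-- Cyclic access into a list, used for reading a list of vertices as a closed walk:
the closed walk visits `cyc w 0, cyc w 1, …, cyc w (w.length - 1)` and returns to
`cyc w 0`. -/
def cyc (w : List ℕ) (k : ℕ) : ℕ := w.getD (k % w.length) 0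

/-- The number of positions at which the closed walk `w` traverses the directed
step from `a` to `b`. -/
def dirCount (w : List ℕ) (a b : ℕ) : ℕ :=
  ((List.range w.length).filter fun k => cyc w k = a ∧ cyc w (k + 1) = b).length

/-- The number of occurrences of the transition `a j b` (two consecutive edges
`aj`, `jb`) in the closed walk `w`; the wrap-around positions are included. -/
def transCount (w : List ℕ) (a j b : ℕ) : ℕ :=
  ((List.range w.length).filter fun k =>
      cyc w k = a ∧ cyc w (k + 1) = j ∧ cyc w (k + 2) = b).length

/-- `w` is an `m`-fold Eulerian circuit in `K_n − i`, the complete graph on the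
vertex set `[n] \ {i}`: it is a nonempty closed walk, all its vertices lie in
`[n] \ {i}`, consecutive vertices are distinct, and every edge of `K_n − i` is
traversed exactly `m` times (in either direction). -/
def IsEulerianM (n m i : ℕ) (w : List ℕ) : Prop :=
  w ≠ [] ∧
  (∀ v ∈ w, v ∈ Finset.Icc 1 n ∧ v ≠ i) ∧
  (∀ k < w.length, cyc w k ≠ cyc w (k + 1)) ∧
  (∀ a b : ℕ, a ∈ Finset.Icc 1 n → b ∈ Finset.Icc 1 n → a ≠ i → b ≠ i → a ≠ b →
    dirCount w a b + dirCount w b a = m)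

/-- `w` is an Eulerian circuit in `K_n − i`. -/
def IsEulerian (n i : ℕ) (w : List ℕ) : Prop := IsEulerianM n 1 i w

/-- Eulerian circuits `Ti` (in `K_n − i`) and `Tj` (in `K_n − j`) are strongly
compatible: for every transition `a j b` in `Ti`, `Tj` contains the transition
`b i a`. -/
def StrongCompat (i j : ℕ) (Ti Tj : List ℕ) : Prop :=
  ∀ a b : ℕ, 0 < transCount Ti a j b → 0 < transCount Tj b i a

/-- Eulerian circuits `Ti` (in `K_n − i`) and `Tj` (in `K_n − j`) are compatible:
for every transition `a j b` in `Ti`, `Tj` contains the transition `a i b` or the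
transition `b i a`. -/
def Compat (i j : ℕ) (Ti Tj : List ℕ) : Prop :=
  ∀ a b : ℕ, 0 < transCount Ti a j b →
    0 < transCount Tj a i b ∨ 0 < transCount Tj b i a

/-- `T 1, …, T n` is an embedding set for `K_n^3`. -/
def IsEmbeddingSet (n : ℕ) (T : ℕ → List ℕ) : Prop :=
  (∀ i ∈ Finset.Icc 1 n, IsEulerian n i (T i)) ∧
  (∀ i ∈ Finset.Icc 1 n, ∀ j ∈ Finset.Icc 1 n, i ≠ j → Compat i j (T i) (T j))

/-- `T 1, …, T n` is a strong embedding set for `K_n^3`. -/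
def IsStrongEmbeddingSet (n : ℕ) (T : ℕ → List ℕ) : Prop :=
  (∀ i ∈ Finset.Icc 1 n, IsEulerian n i (T i)) ∧
  (∀ i ∈ Finset.Icc 1 n, ∀ j ∈ Finset.Icc 1 n, i ≠ j → StrongCompat i j (T i) (T j))

/-- The explicit embedding set for `K_6^3`. -/
def Tfam : ℕ → List ℕ
  | 1 => [2, 3, 4, 2, 5, 3, 6, 4, 5, 6]
  | 2 => [1, 3, 4, 1, 5, 3, 6, 4, 5, 6]
  | 3 => [1, 2, 4, 5, 1, 6, 2, 5, 6, 4]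
  | 4 => [1, 2, 3, 5, 1, 6, 5, 2, 6, 3]
  | 5 => [1, 2, 3, 6, 2, 4, 6, 1, 4, 3]
  | 6 => [1, 2, 5, 3, 4, 2, 3, 1, 4, 5]
  | _ => []

lemma cyc_mem (w : List ℕ) (hw : 0 < w.length) (k : ℕ) : cyc w k ∈ w := by
  unfold cyc
  have h : k % w.length < w.length := Nat.mod_lt _ hw
  rw [List.getD_eq_getElem _ _ h]
  exact List.getElem_mem h

lemma transCount_pos_mem {w : List ℕ} {a j b : ℕ} (h : 0 < transCount w a j b) :
    a ∈ w ∧ b ∈ w := by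
  unfold transCount at h
  rw [List.length_pos_iff] at h
  obtain ⟨k, hk⟩ := List.exists_mem_of_ne_nil _ h
  rw [List.mem_filter] at hk
  have hp := hk.2
  simp only [decide_eq_true_eq] at hp
  have hw : 0 < w.length := by
    by_contra hcon
    have : w.length = 0 := Nat.eq_zero_of_not_pos hcon
    rw [this] at hk
    simpa using hk.1
  exact ⟨hp.1 ▸ cyc_mem w hw k, hp.2.2 ▸ cyc_mem w hw (k + 2)⟩

/-- There exists an embedding set for `K_6^3` such that no matter which subset of
the circuits is replaced by its reversals, the resulting family is never a strong
embedding set. -/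

theorem embedding_set_K6_not_strong :
    ∃ T : ℕ → List ℕ, IsEmbeddingSet 6 T ∧
      ∀ T' : ℕ → List ℕ,
        (∀ i ∈ Finset.Icc 1 6, T' i = T i ∨ T' i = (T i).reverse) →
        ¬ IsStrongEmbeddingSet 6 T' := by
  refine ⟨Tfam, ⟨?_, ?_⟩, ?_⟩
  · -- Eulerian circuits
    intro i hi
    refine ⟨?_, ?_, ?_, ?_⟩
    · revert hi; revert i; decide
    · revert hi; revert i; decide
    · revert hi; revert i; decide
    · intro a b ha hb
      have key : ∀ i ∈ Finset.Icc 1 6, ∀ a ∈ Finset.Icc 1 6, ∀ b ∈ Finset.Icc 1 6,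
          a ≠ i → b ≠ i → a ≠ b →
          dirCount (Tfam i) a b + dirCount (Tfam i) b a = 1 := by decide
      exact key i hi a ha b hb
  · -- compatibility
    intro i hi j hj hij a b hpos
    obtain ⟨ha, hb⟩ := transCount_pos_mem hpos
    have key : ∀ i ∈ Finset.Icc 1 6, ∀ j ∈ Finset.Icc 1 6, i ≠ j →
        ∀ a ∈ Tfam i, ∀ b ∈ Tfam i, 0 < transCount (Tfam i) a j b →
          0 < transCount (Tfam j) a i b ∨ 0 < transCount (Tfam j) b i a := by decide
    exact key i hi j hj hij a ha b hb hpos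
  · -- no reversal pattern gives a strong embedding set
    intro T' hT' hs
    have h1 := hT' 1 (by decide)
    have h2 := hT' 2 (by decide)
    have h3 := hT' 3 (by decide)
    have hsc2 := hs.2 1 (by decide) 2 (by decide) (by decide)
    have hsc3 := hs.2 1 (by decide) 3 (by decide) (by decide)
    rcases h1 with h1 | h1 <;> rcases h2 with h2 | h2 <;> rcases h3 with h3 | h3
    · exact absurd (hsc2 6 3 (by rw [h1]; decide)) (by rw [h2]; decide)
    · exact absurd (hsc2 6 3 (by rw [h1]; decide)) (by rw [h2]; decide)
    · exact absurd (hsc3 5 6 (by rw [h1]; decide)) (by rw [h3]; decide)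
    · exact absurd (hsc3 2 4 (by rw [h1]; decide)) (by rw [h3]; decide)
    · exact absurd (hsc3 4 2 (by rw [h1]; decide)) (by rw [h3]; decide)
    · exact absurd (hsc3 6 5 (by rw [h1]; decide)) (by rw [h3]; decide)
    · exact absurd (hsc2 3 6 (by rw [h1]; decide)) (by rw [h2]; decide)
    · exact absurd (hsc2 3 6 (by rw [h1]; decide)) (by rw [h2]; decide)
end

section
/- Let n ≥ 4 be even, and for each i ∈ [n] fix an ordered pair (s_i, t_i) of distinct vertices of [n] ∖ {i}. Then the number of n-tuples (T_1,…,T_n) such that each T_i is an Eulerian circuit in K_n − i given as a closed walk starting at s_i whose first edge is s_i t_i (traversed from s_i to t_i), and such that T_i and T_j are compatible for all i ≠ j, is at most ((n−3)!!)^{n(n−1)/2}, where (n−3)!! = (n−3)(n−5)⋯3·1. -/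
namespace CCT

lemma cyc_congr {w : List ℕ} {k k' : ℕ} (h : k % w.length = k' % w.length) :
    cyc w k = cyc w k' := by simp [cyc, h]

lemma cyc_add_congr {w : List ℕ} {k k' : ℕ} (h : k % w.length = k' % w.length) (m : ℕ) :
    cyc w (k + m) = cyc w (k' + m) := by
  apply cyc_congr
  rw [Nat.add_mod k, Nat.add_mod k', h]

lemma cyc_mod (w : List ℕ) (k : ℕ) : cyc w (k % w.length) = cyc w k := by
  apply cyc_congr; exact Nat.mod_mod_of_dvd k dvd_rfl

lemma cyc_mem {w : List ℕ} (hw : w ≠ []) (k : ℕ) : cyc w k ∈ w := by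
  have hl : 0 < w.length := List.length_pos_iff.mpr hw
  have : k % w.length < w.length := Nat.mod_lt _ hl
  rw [cyc, List.getD_eq_getElem w 0 this]
  exact List.getElem_mem _

-- Finset versions
def dirF (w : List ℕ) (a b : ℕ) : Finset ℕ :=
  (Finset.range w.length).filter fun k => cyc w k = a ∧ cyc w (k + 1) = b

def transF (w : List ℕ) (a j b : ℕ) : Finset ℕ :=
  (Finset.range w.length).filter fun k =>
      cyc w k = a ∧ cyc w (k + 1) = j ∧ cyc w (k + 2) = b

lemma dirCount_eq (w : List ℕ) (a b : ℕ) : dirCount w a b = (dirF w a b).card := by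
  rfl

lemma transCount_eq (w : List ℕ) (a j b : ℕ) : transCount w a j b = (transF w a j b).card := by
  rfl

end CCT
namespace CCT

variable {n i : ℕ} {w : List ℕ}

lemma step_ne (hw : IsEulerianM n 1 i w) (k : ℕ) : cyc w k ≠ cyc w (k + 1) := by
  have hl : 0 < w.length := List.length_pos_iff.mpr hw.1
  have h1 : cyc w k = cyc w (k % w.length) := (cyc_mod w k).symm
  have h2 : cyc w (k + 1) = cyc w (k % w.length + 1) :=
    cyc_add_congr (Nat.mod_mod_of_dvd k dvd_rfl).symm 1
  rw [h1, h2]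
  exact hw.2.2.1 _ (Nat.mod_lt _ hl)

lemma mem_transF {k a j b : ℕ} :
    k ∈ transF w a j b ↔ k < w.length ∧ cyc w k = a ∧ cyc w (k + 1) = j ∧ cyc w (k + 2) = b := by
  simp [transF, and_assoc]

lemma mem_dirF {k a b : ℕ} :
    k ∈ dirF w a b ↔ k < w.length ∧ cyc w k = a ∧ cyc w (k + 1) = b := by
  simp [dirF, and_assoc]

lemma transCount_pos_of {k a j b : ℕ} (hk : k < w.length) (h1 : cyc w k = a)
    (h2 : cyc w (k + 1) = j) (h3 : cyc w (k + 2) = b) : 0 < transCount w a j b := by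
  rw [transCount_eq, Finset.card_pos]
  exact ⟨k, mem_transF.mpr ⟨hk, h1, h2, h3⟩⟩

lemma exists_of_transCount_pos {a j b : ℕ} (h : 0 < transCount w a j b) :
    ∃ k < w.length, cyc w k = a ∧ cyc w (k + 1) = j ∧ cyc w (k + 2) = b := by
  rw [transCount_eq, Finset.card_pos] at h
  obtain ⟨k, hk⟩ := h
  exact ⟨k, (mem_transF.mp hk).1, (mem_transF.mp hk).2⟩

lemma exists_of_dirCount_pos {a b : ℕ} (h : 0 < dirCount w a b) :
    ∃ k < w.length, cyc w k = a ∧ cyc w (k + 1) = b := by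
  rw [dirCount_eq, Finset.card_pos] at h
  obtain ⟨k, hk⟩ := h
  exact ⟨k, (mem_dirF.mp hk).1, (mem_dirF.mp hk).2⟩

lemma shift_injOn {len : ℕ} (hl : 0 < len) :
    Set.InjOn (fun k => (k + 1) % len) (Finset.range len : Set ℕ) := by
  intro k1 hk1 k2 hk2 heq
  simp only [Finset.coe_range, Set.mem_Iio] at hk1 hk2
  simp only at heq
  rcases Nat.lt_or_ge (k1 + 1) len with c1 | c1 <;>
    rcases Nat.lt_or_ge (k2 + 1) len with c2 | c2
  · rw [Nat.mod_eq_of_lt c1, Nat.mod_eq_of_lt c2] at heq; omega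
  · have h2 : k2 + 1 = len := by omega
    rw [Nat.mod_eq_of_lt c1, h2, Nat.mod_self] at heq; omega
  · have h1 : k1 + 1 = len := by omega
    rw [Nat.mod_eq_of_lt c2, h1, Nat.mod_self] at heq; omega
  · omega

lemma shift_maps {a j b k : ℕ} (hw : w ≠ []) (hk : k ∈ transF w a j b) :
    (k + 1) % w.length ∈ dirF w j b := by
  have hl : 0 < w.length := List.length_pos_iff.mpr hw
  rw [mem_transF] at hk
  rw [mem_dirF]
  refine ⟨Nat.mod_lt _ hl, ?_, ?_⟩
  · rw [cyc_mod]; exact hk.2.2.1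
  · rw [cyc_add_congr (Nat.mod_mod_of_dvd (k+1) dvd_rfl) 1]; exact hk.2.2.2

lemma transF_le_dir_snd {a j b : ℕ} (hw : w ≠ []) :
    (transF w a j b).card ≤ (dirF w j b).card := by
  have hl : 0 < w.length := List.length_pos_iff.mpr hw
  apply Finset.card_le_card_of_injOn (fun k => (k + 1) % w.length)
  · intro k hk; exact shift_maps hw hk
  · exact (shift_injOn hl).mono (by
      intro k hk
      simp only [Finset.coe_range, Set.mem_Iio]
      exact (mem_transF.mp hk).1)

lemma card_transF_union_le_dir_snd {a b j c : ℕ} (hw : w ≠ []) (hbc : b ≠ c) :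
    (transF w b j a).card + (transF w c j a).card ≤ (dirF w j a).card := by
  have hl : 0 < w.length := List.length_pos_iff.mpr hw
  have hdisj : Disjoint (transF w b j a) (transF w c j a) := by
    rw [Finset.disjoint_left]
    intro k h1 h2
    exact hbc ((mem_transF.mp h1).2.1.symm.trans (mem_transF.mp h2).2.1)
  rw [← Finset.card_union_of_disjoint hdisj]
  apply Finset.card_le_card_of_injOn (fun k => (k + 1) % w.length)
  · intro k hk
    rcases Finset.mem_union.mp hk with h | h <;> exact shift_maps hw h
  · exact (shift_injOn hl).mono (by
      intro k hk
      simp only [Finset.coe_union, Set.mem_union, Finset.mem_coe] at hk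
      simp only [Finset.coe_range, Set.mem_Iio]
      rcases hk with h | h <;> exact (mem_transF.mp h).1)

lemma card_transF_union_le_dir_fst {a b c j : ℕ} (hbc : b ≠ c) :
    (transF w a j b).card + (transF w a j c).card ≤ (dirF w a j).card := by
  have hdisj : Disjoint (transF w a j b) (transF w a j c) := by
    rw [Finset.disjoint_left]
    intro k h1 h2
    exact hbc ((mem_transF.mp h1).2.2.2.symm.trans (mem_transF.mp h2).2.2.2)
  rw [← Finset.card_union_of_disjoint hdisj]
  apply Finset.card_le_card
  intro k hk
  rcases Finset.mem_union.mp hk with h | h <;> rw [mem_transF] at h <;>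
    exact mem_dirF.mpr ⟨h.1, h.2.1, h.2.2.1⟩

lemma transF_le_dir_fst {a j b : ℕ} : (transF w a j b).card ≤ (dirF w a j).card := by
  apply Finset.card_le_card
  intro k hk; rw [mem_transF] at hk
  exact mem_dirF.mpr ⟨hk.1, hk.2.1, hk.2.2.1⟩

end CCT
namespace CCT

/-- unordered transition relation of `w` at vertex `j`. -/
def R (w : List ℕ) (j a b : ℕ) : Prop := 0 < transCount w a j b ∨ 0 < transCount w b j a

variable {n i : ℕ} {w : List ℕ}

lemma R_symm {j a b : ℕ} (h : R w j a b) : R w j b a := h.symm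

/-- the vertex set of `K_n - i - j`. -/
def V (n i j : ℕ) : Finset ℕ := ((Finset.Icc 1 n).erase i).erase j

lemma mem_V {n i j a : ℕ} : a ∈ V n i j ↔ a ∈ Finset.Icc 1 n ∧ a ≠ i ∧ a ≠ j := by
  simp [V, Finset.mem_erase]; tauto

lemma V_comm (n i j : ℕ) : V n i j = V n j i := by
  ext a; simp [mem_V]; tauto

-- properties of any R-partner
lemma R_props (hw : IsEulerianM n 1 i w) {j a b : ℕ} (h : R w j a b) :
    b ∈ Finset.Icc 1 n ∧ b ≠ i ∧ b ≠ j := by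
  rcases h with h | h
  · obtain ⟨k, hk, h1, h2, h3⟩ := exists_of_transCount_pos h
    have hmem := hw.2.1 _ (cyc_mem hw.1 (k+2))
    rw [h3] at hmem
    refine ⟨hmem.1, hmem.2, ?_⟩
    rw [← h2, ← h3]
    exact fun e => step_ne hw (k+1) e.symm
  · obtain ⟨k, hk, h1, h2, h3⟩ := exists_of_transCount_pos h
    have hmem := hw.2.1 _ (cyc_mem hw.1 k)
    rw [h1] at hmem
    refine ⟨hmem.1, hmem.2, ?_⟩
    rw [← h1, ← h2]
    exact step_ne hw k

lemma not_R_self (hw : IsEulerianM n 1 i w) {j a : ℕ} (hj : j ∈ Finset.Icc 1 n) (hji : j ≠ i)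
    (ha : a ∈ Finset.Icc 1 n) (hai : a ≠ i) (haj : a ≠ j) : ¬ R w j a a := by
  intro h
  have h' : 0 < transCount w a j a := by rcases h with h | h <;> exact h
  have h1 : (transF w a j a).card ≤ (dirF w a j).card := transF_le_dir_fst
  have h2 : (transF w a j a).card ≤ (dirF w j a).card := transF_le_dir_snd hw.1
  have hsum := hw.2.2.2 a j ha hj hai hji haj
  rw [dirCount_eq, dirCount_eq] at hsum
  rw [transCount_eq] at h'
  omega

lemma R_exists (hw : IsEulerianM n 1 i w) {j a : ℕ} (hj : j ∈ Finset.Icc 1 n) (hji : j ≠ i)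
    (ha : a ∈ Finset.Icc 1 n) (hai : a ≠ i) (haj : a ≠ j) : ∃ b, R w j a b := by
  have hl : 0 < w.length := List.length_pos_iff.mpr hw.1
  have hsum := hw.2.2.2 a j ha hj hai hji haj
  rcases Nat.lt_or_ge 0 (dirCount w a j) with h | h
  · obtain ⟨k, hk, h1, h2⟩ := exists_of_dirCount_pos h
    exact ⟨cyc w (k + 2), Or.inl (transCount_pos_of hk h1 h2 rfl)⟩
  · have h' : 0 < dirCount w j a := by omega
    obtain ⟨k, hk, h1, h2⟩ := exists_of_dirCount_pos h'
    rcases Nat.eq_zero_or_pos k with rfl | hkpos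
    · refine ⟨cyc w (w.length - 1), Or.inr (transCount_pos_of (k := w.length - 1)
        (by omega) rfl ?_ ?_)⟩
      · have : w.length - 1 + 1 = w.length := by omega
        rw [this, ← h1]
        exact cyc_congr (by simp [Nat.mod_self])
      · have : w.length - 1 + 2 = w.length + 1 := by omega
        rw [this, ← h2]
        apply cyc_congr
        conv_lhs => rw [Nat.add_mod, Nat.mod_self]
        simp
    · refine ⟨cyc w (k - 1), Or.inr (transCount_pos_of (k := k - 1) (by omega) rfl ?_ ?_)⟩
      · have : k - 1 + 1 = k := by omega
        rw [this, h1]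
      · have : k - 1 + 2 = k + 1 := by omega
        rw [this, h2]

lemma R_unique (hw : IsEulerianM n 1 i w) {j a b c : ℕ} (hj : j ∈ Finset.Icc 1 n) (hji : j ≠ i)
    (ha : a ∈ Finset.Icc 1 n) (hai : a ≠ i) (haj : a ≠ j)
    (hb : R w j a b) (hc : R w j a c) : b = c := by
  by_contra hbc
  have hsum := hw.2.2.2 a j ha hj hai hji haj
  rw [dirCount_eq, dirCount_eq] at hsum
  rcases hb with hb | hb <;> rcases hc with hc | hc <;> rw [transCount_eq] at hb hc
  · have := card_transF_union_le_dir_fst (w := w) (a := a) (j := j) hbc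
    omega
  · have h1 : (transF w a j b).card ≤ (dirF w a j).card := transF_le_dir_fst
    have h2 : (transF w c j a).card ≤ (dirF w j a).card := transF_le_dir_snd hw.1
    omega
  · have h1 : (transF w a j c).card ≤ (dirF w a j).card := transF_le_dir_fst
    have h2 : (transF w b j a).card ≤ (dirF w j a).card := transF_le_dir_snd hw.1
    omega
  · have := card_transF_union_le_dir_snd (w := w) (a := a) (j := j) hw.1 hbc
    omega

end CCT
namespace CCT

open Classical in
noncomputable def pf (w : List ℕ) (j a : ℕ) : ℕ :=
  if h : ∃ b, R w j a b then h.choose else 0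

variable {n i : ℕ} {w : List ℕ}

lemma pf_spec (hw : IsEulerianM n 1 i w) {j a : ℕ} (hj : j ∈ Finset.Icc 1 n) (hji : j ≠ i)
    (ha : a ∈ V n i j) : R w j a (pf w j a) := by
  rw [mem_V] at ha
  have h : ∃ b, R w j a b := R_exists hw hj hji ha.1 ha.2.1 ha.2.2
  classical
  rw [pf]
  rw [dif_pos h]
  exact h.choose_spec

lemma pf_eq (hw : IsEulerianM n 1 i w) {j a b : ℕ} (hj : j ∈ Finset.Icc 1 n) (hji : j ≠ i)
    (ha : a ∈ V n i j) (hb : R w j a b) : pf w j a = b := by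
  rw [mem_V] at ha
  exact R_unique hw hj hji ha.1 ha.2.1 ha.2.2 (by rw [← mem_V] at ha; exact pf_spec hw hj hji ha) hb

lemma pf_mem (hw : IsEulerianM n 1 i w) {j a : ℕ} (hj : j ∈ Finset.Icc 1 n) (hji : j ≠ i)
    (ha : a ∈ V n i j) : pf w j a ∈ V n i j := by
  rw [mem_V]
  exact R_props hw (pf_spec hw hj hji ha)

lemma pf_ne (hw : IsEulerianM n 1 i w) {j a : ℕ} (hj : j ∈ Finset.Icc 1 n) (hji : j ≠ i)
    (ha : a ∈ V n i j) : pf w j a ≠ a := by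
  intro h
  have := pf_spec hw hj hji ha
  rw [h] at this
  rw [mem_V] at ha
  exact not_R_self hw hj hji ha.1 ha.2.1 ha.2.2 this

lemma pf_invol (hw : IsEulerianM n 1 i w) {j a : ℕ} (hj : j ∈ Finset.Icc 1 n) (hji : j ≠ i)
    (ha : a ∈ V n i j) : pf w j (pf w j a) = a := by
  have hb := pf_spec hw hj hji ha
  exact pf_eq hw hj hji (pf_mem hw hj hji ha) (R_symm hb)

/-- normalized partner function, whose support is `V n i j`. -/
noncomputable def pfN (n i j : ℕ) (w : List ℕ) : ℕ → ℕ :=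
  fun a => if a ∈ V n i j then pf w j a else 0

def InvSet (S : Finset ℕ) : Set (ℕ → ℕ) :=
  {f | (∀ a ∈ S, f a ∈ S ∧ f a ≠ a ∧ f (f a) = a) ∧ ∀ a ∉ S, f a = 0}

lemma pfN_mem_InvSet (hw : IsEulerianM n 1 i w) {j : ℕ} (hj : j ∈ Finset.Icc 1 n)
    (hji : j ≠ i) : pfN n i j w ∈ InvSet (V n i j) := by
  constructor
  · intro a ha
    have h1 : pfN n i j w a = pf w j a := if_pos ha
    have hm := pf_mem hw hj hji ha
    refine ⟨by rw [h1]; exact hm, by rw [h1]; exact pf_ne hw hj hji ha, ?_⟩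
    rw [h1, pfN, if_pos hm]
    exact pf_invol hw hj hji ha
  · intro a ha
    exact if_neg ha

/-- compatibility transfers the relation. -/
lemma R_transfer {i j : ℕ} {Ti Tj : List ℕ} (hc : Compat i j Ti Tj) {a b : ℕ}
    (h : R Ti j a b) : R Tj i a b := by
  rcases h with h | h
  · exact hc a b h
  · exact (hc b a h).symm

lemma pfN_compat {n i j : ℕ} {Ti Tj : List ℕ} (hwi : IsEulerianM n 1 i Ti)
    (hwj : IsEulerianM n 1 j Tj) (hi : i ∈ Finset.Icc 1 n) (hj : j ∈ Finset.Icc 1 n)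
    (hij : i ≠ j) (hc : Compat i j Ti Tj) : pfN n i j Ti = pfN n j i Tj := by
  funext a
  rw [pfN, pfN, ← V_comm]
  by_cases ha : a ∈ V n j i
  · rw [if_pos ha, if_pos ha]
    have ha' : a ∈ V n i j := by rw [V_comm]; exact ha
    have hR : R Ti j a (pf Ti j a) := pf_spec hwi hj (Ne.symm hij) ha'
    have hR' : R Tj i a (pf Ti j a) := R_transfer hc hR
    exact (pf_eq hwj hi hij ha hR').symm
  · rw [if_neg ha, if_neg ha]

end CCT
namespace CCT

variable {n i : ℕ} {w : List ℕ}

lemma length_det (hw : IsEulerianM n 1 i w) :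
    2 * w.length = ((Finset.Icc 1 n).erase i).offDiag.card := by
  classical
  set S := (Finset.Icc 1 n).erase i with hS
  have hmap : ∀ k ∈ Finset.range w.length,
      (cyc w k, cyc w (k+1)) ∈ S ×ˢ S := by
    intro k _
    have h1 := hw.2.1 _ (cyc_mem hw.1 k)
    have h2 := hw.2.1 _ (cyc_mem hw.1 (k+1))
    simp only [Finset.mem_product, hS, Finset.mem_erase]
    exact ⟨⟨h1.2, h1.1⟩, ⟨h2.2, h2.1⟩⟩
  have hcard : w.length = ∑ p ∈ S ×ˢ S, (dirF w p.1 p.2).card := by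
    rw [← Finset.card_range w.length]
    rw [Finset.card_eq_sum_card_fiberwise hmap]
    apply Finset.sum_congr rfl
    intro p _
    congr 1
    ext k
    simp [dirF, Prod.ext_iff, and_assoc]
  have hdiag : ∀ p ∈ S ×ˢ S, p.1 = p.2 → (dirF w p.1 p.2).card = 0 := by
    intro p _ hp
    rw [Finset.card_eq_zero]
    ext k
    simp only [mem_dirF, Finset.notMem_empty, iff_false]
    rintro ⟨hk, h1, h2⟩
    exact step_ne hw k (by rw [h1, h2, hp])
  have hoff : w.length = ∑ p ∈ S.offDiag, (dirF w p.1 p.2).card := by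
    rw [hcard, show S.offDiag = (S ×ˢ S).filter (fun p => p.1 ≠ p.2) by ext p; simp [Finset.mem_offDiag, and_assoc]]
    rw [← Finset.sum_filter_add_sum_filter_not (S ×ˢ S) (fun p => p.1 ≠ p.2)]
    have : ∑ p ∈ (S ×ˢ S).filter (fun p => ¬ p.1 ≠ p.2), (dirF w p.1 p.2).card = 0 := by
      apply Finset.sum_eq_zero
      intro p hp
      rw [Finset.mem_filter, not_not] at hp
      exact hdiag p hp.1 hp.2
    omega
  have hswap : ∑ p ∈ S.offDiag, (dirF w p.1 p.2).card
      = ∑ p ∈ S.offDiag, (dirF w p.2 p.1).card := by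
    apply Finset.sum_nbij' (fun p => (p.2, p.1)) (fun p => (p.2, p.1)) <;>
      simp +contextual [Finset.mem_offDiag, eq_comm, Ne.symm]
  have hone : ∑ p ∈ S.offDiag, ((dirF w p.1 p.2).card + (dirF w p.2 p.1).card)
      = S.offDiag.card := by
    rw [Finset.card_eq_sum_ones]
    apply Finset.sum_congr rfl
    intro p hp
    rw [Finset.mem_offDiag] at hp
    have h1 : p.1 ∈ Finset.Icc 1 n ∧ p.1 ≠ i := by
      have := hp.1; rw [hS, Finset.mem_erase] at this; exact ⟨this.2, this.1⟩
    have h2 : p.2 ∈ Finset.Icc 1 n ∧ p.2 ≠ i := by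
      have := hp.2.1; rw [hS, Finset.mem_erase] at this; exact ⟨this.2, this.1⟩
    have := hw.2.2.2 p.1 p.2 h1.1 h2.1 h1.2 h2.2 hp.2.2
    rw [dirCount_eq, dirCount_eq] at this
    omega
  rw [← hone, Finset.sum_add_distrib, ← hswap, ← hoff, two_mul]

/-- An Eulerian circuit is determined by its start edge and its transition partners. -/
lemma determined {w w' : List ℕ} (hw : IsEulerianM n 1 i w) (hw' : IsEulerianM n 1 i w')
    (h0 : cyc w 0 = cyc w' 0) (h1 : cyc w 1 = cyc w' 1)
    (hpf : ∀ j, j ∈ Finset.Icc 1 n → j ≠ i → ∀ a ∈ V n i j, pf w j a = pf w' j a) :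
    w = w' := by
  have hlen : w.length = w'.length := by
    have := length_det hw
    have := length_det hw'
    omega
  have key : ∀ k, cyc w k = cyc w' k ∧ cyc w (k+1) = cyc w' (k+1) := by
    intro k
    induction k with
    | zero => exact ⟨h0, h1⟩
    | succ m ih =>
      refine ⟨ih.2, ?_⟩
      -- show cyc w (m+2) = cyc w' (m+2)
      set a := cyc w m with hadef
      set j := cyc w (m+1) with hjdef
      have hav := hw.2.1 _ (cyc_mem hw.1 m)
      have hjv := hw.2.1 _ (cyc_mem hw.1 (m+1))
      have haj : a ≠ j := step_ne hw m
      have haV : a ∈ V n i j := mem_V.mpr ⟨hav.1, hav.2, haj⟩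
      -- transition of w at position m
      have hRw : R w j a (cyc w (m+2)) := by
        left
        apply transCount_pos_of (k := m % w.length) (Nat.mod_lt _ (List.length_pos_iff.mpr hw.1))
        · exact cyc_mod w m
        · exact cyc_add_congr (Nat.mod_mod_of_dvd m dvd_rfl) 1
        · exact cyc_add_congr (Nat.mod_mod_of_dvd m dvd_rfl) 2
      have hRw' : R w' j a (cyc w' (m+2)) := by
        left
        apply transCount_pos_of (k := m % w'.length) (Nat.mod_lt _ (List.length_pos_iff.mpr hw'.1))
        · rw [cyc_mod]; exact ih.1.symm
        · rw [cyc_add_congr (Nat.mod_mod_of_dvd m dvd_rfl) 1]; exact ih.2.symm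
        · exact cyc_add_congr (Nat.mod_mod_of_dvd m dvd_rfl) 2
      have e1 : pf w j a = cyc w (m+2) := pf_eq hw hjv.1 hjv.2 haV hRw
      have e2 : pf w' j a = cyc w' (m+2) := pf_eq hw' hjv.1 hjv.2 haV hRw'
      have := hpf j hjv.1 hjv.2 a haV
      rw [e1, e2] at this
      exact this
  apply List.ext_getElem hlen
  intro m hm hm'
  have h := (key m).1
  rw [cyc, cyc, Nat.mod_eq_of_lt hm, Nat.mod_eq_of_lt (hlen ▸ hm)] at h
  rw [List.getD_eq_getElem w 0 hm, List.getD_eq_getElem w' 0 hm'] at h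
  exact h

end CCT
namespace CCT

lemma invSet_finite (S : Finset ℕ) : (InvSet S).Finite := by
  rw [← Set.finite_coe_iff]
  have : ∀ f : InvSet S, ∀ a : {x // x ∈ S}, f.1 a.1 ∈ S := by
    intro f a
    exact (f.2.1 a.1 a.2).1
  apply Finite.of_injective (fun f : InvSet S => fun a : {x // x ∈ S} => (⟨f.1 a.1, this f a⟩ : {x // x ∈ S}))
  intro f g h
  ext a
  by_cases ha : a ∈ S
  · have := congrFun h ⟨a, ha⟩
    exact Subtype.ext_iff.mp this
  · rw [f.2.2 a ha, g.2.2 a ha]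

lemma ncard_biUnion_le {α : Type*} (s : Finset ℕ) (f : ℕ → Set α)
    (hf : ∀ b ∈ s, (f b).Finite) :
    (⋃ b ∈ s, f b).ncard ≤ ∑ b ∈ s, (f b).ncard := by
  classical
  induction s using Finset.induction with
  | empty => simp
  | insert x s' hx ih =>
    rw [Finset.sum_insert hx]
    have : (⋃ b ∈ insert x s', f b) = f x ∪ ⋃ b ∈ s', f b := by
      simp [Set.biUnion_insert]
    rw [this]
    calc (f x ∪ ⋃ b ∈ s', f b).ncard ≤ (f x).ncard + (⋃ b ∈ s', f b).ncard :=
          Set.ncard_union_le _ _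
      _ ≤ (f x).ncard + ∑ b ∈ s', (f b).ncard := by
          have := ih (fun b hb => hf b (Finset.mem_insert_of_mem hb))
          omega

lemma dF_step {k : ℕ} (hk : 1 ≤ k) : k.doubleFactorial = k * (k - 2).doubleFactorial := by
  rcases k with _ | _ | m
  · omega
  · rfl
  · exact Nat.doubleFactorial_add_two m

lemma invSet_card_le : ∀ m : ℕ, ∀ S : Finset ℕ, S.card ≤ m →
    (InvSet S).ncard ≤ (S.card - 1).doubleFactorial := by
  intro m
  induction m using Nat.strong_induction_on with
  | _ m ih =>
  intro S hSm
  rcases Finset.eq_empty_or_nonempty S with rfl | hS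
  · have hsub : InvSet ∅ ⊆ {fun _ => 0} := by
      intro f hf
      simp only [Set.mem_singleton_iff]
      funext a
      exact hf.2 a (Finset.notMem_empty a)
    calc (InvSet ∅).ncard ≤ ({fun _ => 0} : Set (ℕ → ℕ)).ncard :=
          Set.ncard_le_ncard hsub (Set.finite_singleton _)
      _ = 1 := Set.ncard_singleton _
      _ ≤ _ := Nat.doubleFactorial_pos _
  · obtain ⟨a₀, ha₀⟩ := hS
    have hm : 1 ≤ S.card := Finset.card_pos.mpr ⟨a₀, ha₀⟩
    have hm1 : 1 ≤ m := le_trans hm hSm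
    have hcover : InvSet S ⊆ ⋃ b ∈ S.erase a₀, {f ∈ InvSet S | f a₀ = b} := by
      intro f hf
      have h1 := hf.1 a₀ ha₀
      exact Set.mem_biUnion (Finset.mem_erase.mpr ⟨h1.2.1, h1.1⟩) ⟨hf, rfl⟩
    have hfib : ∀ b ∈ S.erase a₀,
        ({f ∈ InvSet S | f a₀ = b} : Set (ℕ → ℕ)).ncard
          ≤ (InvSet ((S.erase a₀).erase b)).ncard := by
      intro b hb
      rw [Finset.mem_erase] at hb
      set S' := (S.erase a₀).erase b with hS'
      have hmemS' : ∀ x, x ∈ S' ↔ x ∈ S ∧ x ≠ a₀ ∧ x ≠ b := by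
        intro x; simp [hS', Finset.mem_erase]; tauto
      refine Set.ncard_le_ncard_of_injOn (fun f => fun a => if a ∈ S' then f a else 0)
        ?_ ?_ (invSet_finite _)
      · rintro f ⟨hf, hfa⟩
        have hfb : f b = a₀ := by
          have := (hf.1 a₀ ha₀).2.2
          rw [hfa] at this; exact this
        constructor
        · intro a ha
          have ha' := (hmemS' a).mp ha
          have h1 := hf.1 a ha'.1
          have hfaa : f a ∈ S' := by
            rw [hmemS']
            refine ⟨h1.1, ?_, ?_⟩
            · intro e
              apply ha'.2.2
              rw [← h1.2.2, e, hfa]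
            · intro e
              apply ha'.2.1
              rw [← h1.2.2, e, hfb]
          dsimp only
          simp only [if_pos ha, if_pos hfaa]
          exact ⟨hfaa, h1.2.1, h1.2.2⟩
        · intro a ha
          dsimp only
          simp only [if_neg ha]
      · rintro f ⟨hf, hfa⟩ g ⟨hg, hga⟩ heq
        have hfb : f b = a₀ := by have := (hf.1 a₀ ha₀).2.2; rw [hfa] at this; exact this
        have hgb : g b = a₀ := by have := (hg.1 a₀ ha₀).2.2; rw [hga] at this; exact this
        funext x
        by_cases hx : x ∈ S'
        · have := congrFun heq x
          simpa only [if_pos hx] using this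
        · by_cases hxS : x ∈ S
          · have hx' := hx
            rw [hmemS'] at hx'
            push_neg at hx'
            rcases eq_or_ne x a₀ with rfl | hxa
            · rw [hfa, hga]
            · rw [hx' hxS hxa, hfb, hgb]
          · rw [hf.2 x hxS, hg.2 x hxS]
    have hcard' : ∀ b ∈ S.erase a₀, ((S.erase a₀).erase b).card = S.card - 2 := by
      intro b hb
      rw [Finset.card_erase_of_mem hb, Finset.card_erase_of_mem ha₀]
      omega
    have hUfin : (⋃ b ∈ S.erase a₀, {f ∈ InvSet S | f a₀ = b} : Set (ℕ → ℕ)).Finite := by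
      apply Set.Finite.biUnion (Finset.finite_toSet _)
      intro b _
      exact (invSet_finite S).subset (Set.sep_subset _ _)
    calc (InvSet S).ncard
        ≤ (⋃ b ∈ S.erase a₀, {f ∈ InvSet S | f a₀ = b}).ncard :=
          Set.ncard_le_ncard hcover hUfin
      _ ≤ ∑ b ∈ S.erase a₀, ({f ∈ InvSet S | f a₀ = b} : Set (ℕ → ℕ)).ncard :=
          ncard_biUnion_le _ _ (fun b _ => (invSet_finite S).subset (Set.sep_subset _ _))
      _ ≤ ∑ b ∈ S.erase a₀, (InvSet ((S.erase a₀).erase b)).ncard :=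
          Finset.sum_le_sum hfib
      _ ≤ ∑ b ∈ S.erase a₀, (S.card - 2 - 1).doubleFactorial := by
          apply Finset.sum_le_sum
          intro b hb
          have := ih (m - 1) (by omega) ((S.erase a₀).erase b) (by rw [hcard' b hb]; omega)
          rw [hcard' b hb] at this
          exact this
      _ = (S.card - 1) * (S.card - 3).doubleFactorial := by
          rw [Finset.sum_const, Finset.card_erase_of_mem ha₀, smul_eq_mul]
          have h3 : S.card - 2 - 1 = S.card - 3 := by omega
          rw [h3]
      _ ≤ (S.card - 1).doubleFactorial := by
          rcases Nat.eq_zero_or_pos (S.card - 1) with h | h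
          · rw [h]
            simp
          · rw [dF_step h]
            apply Nat.mul_le_mul_left
            have h3 : S.card - 1 - 2 = S.card - 3 := by omega
            rw [h3]

end CCT
namespace CCT

lemma card_V {n i j : ℕ} (hi : i ∈ Finset.Icc 1 n) (hj : j ∈ Finset.Icc 1 n) (hij : i ≠ j) :
    (V n i j).card = n - 2 := by
  rw [V, Finset.card_erase_of_mem (Finset.mem_erase.mpr ⟨Ne.symm hij, hj⟩),
    Finset.card_erase_of_mem hi, Nat.card_Icc]
  omega

def Pr (n : ℕ) : Finset (ℕ × ℕ) := ((Finset.Icc 1 n).offDiag).filter fun p => p.1 < p.2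

lemma mem_Pr {n : ℕ} {p : ℕ × ℕ} :
    p ∈ Pr n ↔ p.1 ∈ Finset.Icc 1 n ∧ p.2 ∈ Finset.Icc 1 n ∧ p.1 < p.2 := by
  simp only [Pr, Finset.mem_filter, Finset.mem_offDiag]
  constructor
  · rintro ⟨⟨h1, h2, _⟩, h4⟩; exact ⟨h1, h2, h4⟩
  · rintro ⟨h1, h2, h3⟩; exact ⟨⟨h1, h2, Nat.ne_of_lt h3⟩, h3⟩

lemma card_Pr {n : ℕ} (hn : 1 ≤ n) : (Pr n).card = n * (n - 1) / 2 := by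
  have hsplit : (Pr n).card + ((Finset.Icc 1 n).offDiag.filter fun p => ¬ p.1 < p.2).card
      = (Finset.Icc 1 n).offDiag.card := by
    rw [Pr]
    exact Finset.card_filter_add_card_filter_not _
  have hbij : ((Finset.Icc 1 n).offDiag.filter fun p => ¬ p.1 < p.2).card = (Pr n).card := by
    apply Finset.card_nbij' (fun p => (p.2, p.1)) (fun p => (p.2, p.1))
    · intro p hp
      simp only [Finset.mem_coe, Finset.mem_filter, Finset.mem_offDiag] at hp
      rw [Finset.mem_coe, mem_Pr]
      exact ⟨hp.1.2.1, hp.1.1, lt_of_le_of_ne (not_lt.mp hp.2) (Ne.symm hp.1.2.2)⟩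
    · intro p hp
      rw [Finset.mem_coe, mem_Pr] at hp
      simp only [Finset.mem_coe, Finset.mem_filter, Finset.mem_offDiag, not_lt]
      exact ⟨⟨hp.2.1, hp.1, Ne.symm (Nat.ne_of_lt hp.2.2)⟩, le_of_lt hp.2.2⟩
    · intro p _; rfl
    · intro p _; rfl
  have hoffcard : (Finset.Icc 1 n).offDiag.card = n * n - n := by
    rw [Finset.offDiag_card, Nat.card_Icc, Nat.add_sub_cancel]
  have h2 : 2 * (Pr n).card = n * (n - 1) := by
    rw [Nat.mul_sub_one]
    omega
  omega

lemma dvd_pr {n : ℕ} : 2 ∣ n * (n - 1) := by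
  rcases Nat.even_or_odd n with h | h
  · exact Dvd.dvd.mul_right h.two_dvd _
  · rcases n with _ | m
    · simp
    · have : Even m := Nat.Odd.sub_odd h odd_one
      exact Dvd.dvd.mul_left (by simpa using this.two_dvd) _

end CCT
namespace CCT

noncomputable def Phi (n : ℕ) (T : ℕ → List ℕ) : {p // p ∈ Pr n} → (ℕ → ℕ) :=
  fun p => pfN n p.1.1 p.1.2 (T p.1.1)

theorem main (n : ℕ) (hn : 4 ≤ n) (hne : Even n)
    (s t : ℕ → ℕ)
    (hst : ∀ i ∈ Finset.Icc 1 n, s i ∈ Finset.Icc 1 n ∧ t i ∈ Finset.Icc 1 n ∧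
      s i ≠ i ∧ t i ≠ i ∧ s i ≠ t i) :
    Set.ncard {T : ℕ → List ℕ |
        (∀ i, i ∉ Finset.Icc 1 n → T i = []) ∧
        (∀ i ∈ Finset.Icc 1 n,
          IsEulerian n i (T i) ∧ cyc (T i) 0 = s i ∧ cyc (T i) 1 = t i) ∧
        (∀ i ∈ Finset.Icc 1 n, ∀ j ∈ Finset.Icc 1 n, i ≠ j →
          Compat i j (T i) (T j))}
      ≤ (Nat.doubleFactorial (n - 3)) ^ (n * (n - 1) / 2) := by
  classical
  set A := {T : ℕ → List ℕ |
        (∀ i, i ∉ Finset.Icc 1 n → T i = []) ∧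
        (∀ i ∈ Finset.Icc 1 n,
          IsEulerian n i (T i) ∧ cyc (T i) 0 = s i ∧ cyc (T i) 1 = t i) ∧
        (∀ i ∈ Finset.Icc 1 n, ∀ j ∈ Finset.Icc 1 n, i ≠ j →
          Compat i j (T i) (T j))} with hA
  set B := Set.univ.pi (fun p : {p // p ∈ Pr n} => InvSet (V n p.1.1 p.1.2)) with hB
  -- the pi set is finite
  haveI hfinB : ∀ p : {p // p ∈ Pr n}, Finite ↥(InvSet (V n p.1.1 p.1.2)) :=
    fun p => Set.finite_coe_iff.mpr (invSet_finite _)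
  have eB : ↥B ≃ ∀ p : {p // p ∈ Pr n}, ↥(InvSet (V n p.1.1 p.1.2)) :=
    { toFun := fun g p => ⟨g.1 p, g.2 p (Set.mem_univ p)⟩
      invFun := fun g => ⟨fun p => (g p).1, fun p _ => (g p).2⟩
      left_inv := fun g => rfl
      right_inv := fun g => rfl }
  haveI : Finite ↥B := Finite.of_equiv _ eB.symm
  have hBfin : B.Finite := Set.finite_coe_iff.mp this
  -- key facts about elements of A
  have hkey : ∀ T ∈ A, ∀ i ∈ Finset.Icc 1 n, ∀ j ∈ Finset.Icc 1 n, i ≠ j →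
      pfN n i j (T i) = pfN n j i (T j) := by
    intro T hT i hi j hj hij
    exact pfN_compat (hT.2.1 i hi).1 (hT.2.1 j hj).1 hi hj hij (hT.2.2 i hi j hj hij)
  -- Phi maps A into B
  have hmaps : ∀ T ∈ A, Phi n T ∈ B := by
    intro T hT
    intro p _
    obtain ⟨hp1, hp2, hp3⟩ := mem_Pr.mp p.2
    exact pfN_mem_InvSet (hT.2.1 p.1.1 hp1).1 hp2 (Nat.ne_of_lt hp3).symm
  -- Phi is injective on A
  have hinj : Set.InjOn (Phi n) A := by
    intro T hT T' hT' heq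
    funext i
    by_cases hi : i ∈ Finset.Icc 1 n
    · have hpf : ∀ j, j ∈ Finset.Icc 1 n → j ≠ i → ∀ a ∈ V n i j,
          pf (T i) j a = pf (T' i) j a := by
        intro j hj hji a ha
        have hkey1 : pfN n i j (T i) = pfN n i j (T' i) := by
          rcases lt_or_gt_of_ne (fun e => hji e.symm : i ≠ j) with hij | hij
          · have hp : (i, j) ∈ Pr n := mem_Pr.mpr ⟨hi, hj, hij⟩
            have := congrFun heq ⟨(i, j), hp⟩
            simpa [Phi] using this
          · have hp : (j, i) ∈ Pr n := mem_Pr.mpr ⟨hj, hi, hij⟩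
            have h1 := congrFun heq ⟨(j, i), hp⟩
            have h2 : pfN n j i (T j) = pfN n j i (T' j) := by simpa [Phi] using h1
            have h3 := hkey T hT i hi j hj (fun e => hji e.symm)
            have h4 := hkey T' hT' i hi j hj (fun e => hji e.symm)
            rw [h3, h4, h2]
        have := congrFun hkey1 a
        rw [pfN, pfN, if_pos ha, if_pos ha] at this
        exact this
      exact determined (hT.2.1 i hi).1 (hT'.2.1 i hi).1
        (by rw [(hT.2.1 i hi).2.1, (hT'.2.1 i hi).2.1])
        (by rw [(hT.2.1 i hi).2.2, (hT'.2.1 i hi).2.2]) hpf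
    · rw [hT.1 i hi, hT'.1 i hi]
  -- final counting
  calc A.ncard ≤ B.ncard := Set.ncard_le_ncard_of_injOn (Phi n) hmaps hinj hBfin
    _ = Nat.card ↥B := (Nat.card_coe_set_eq _).symm
    _ = Nat.card (∀ p : {p // p ∈ Pr n}, ↥(InvSet (V n p.1.1 p.1.2))) := Nat.card_congr eB
    _ = ∏ p : {p // p ∈ Pr n}, Nat.card ↥(InvSet (V n p.1.1 p.1.2)) := Nat.card_pi
    _ ≤ ∏ _p : {p // p ∈ Pr n}, (n - 3).doubleFactorial := by
        apply Finset.prod_le_prod'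
        intro p _
        obtain ⟨hp1, hp2, hp3⟩ := mem_Pr.mp p.2
        have hcV : (V n p.1.1 p.1.2).card = n - 2 :=
          card_V hp1 hp2 (Nat.ne_of_lt hp3)
        have := invSet_card_le (V n p.1.1 p.1.2).card (V n p.1.1 p.1.2) le_rfl
        rw [Nat.card_coe_set_eq]
        rw [hcV] at this
        have h32 : n - 2 - 1 = n - 3 := by omega
        rw [h32] at this
        exact this
    _ = (n - 3).doubleFactorial ^ (Pr n).card := by
        rw [Finset.prod_const, Finset.card_univ, Fintype.card_coe]
    _ = (n - 3).doubleFactorial ^ (n * (n - 1) / 2) := by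
        rw [card_Pr (by omega : 1 ≤ n)]

end CCT


/-- Let `n ≥ 4` be even and, for each `i ∈ [n]`, fix an ordered pair
`(s i, t i)` of distinct vertices of `[n] \ {i}`. The number of `n`-tuples
`(T 1, …, T n)` such that each `T i` is an Eulerian circuit in `K_n − i` starting
at `s i` with first edge `s i — t i` (traversed from `s i` to `t i`), and such
that `T i` and `T j` are compatible for all `i ≠ j`, is at most
`((n − 3)‼)^(n (n − 1) / 2)`.  (Tuples are encoded as functions `ℕ → List ℕ`
that are trivial outside `[n]`.) -/
theorem count_compatible_tuples (n : ℕ) (hn : 4 ≤ n) (hne : Even n)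
    (s t : ℕ → ℕ)
    (hst : ∀ i ∈ Finset.Icc 1 n, s i ∈ Finset.Icc 1 n ∧ t i ∈ Finset.Icc 1 n ∧
      s i ≠ i ∧ t i ≠ i ∧ s i ≠ t i) :
    Set.ncard {T : ℕ → List ℕ |
        (∀ i, i ∉ Finset.Icc 1 n → T i = []) ∧
        (∀ i ∈ Finset.Icc 1 n,
          IsEulerian n i (T i) ∧ cyc (T i) 0 = s i ∧ cyc (T i) 1 = t i) ∧
        (∀ i ∈ Finset.Icc 1 n, ∀ j ∈ Finset.Icc 1 n, i ≠ j →
          Compat i j (T i) (T j))}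
      ≤ (Nat.doubleFactorial (n - 3)) ^ (n * (n - 1) / 2) := by
  exact CCT.main n hn hne s t hst
end
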